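/- arXiv:1504.02501 — 9 statements merged into one kernel-verified Lean document; each statement's English description precedes it below -/
import Mathlib

section
/- Strong Duality Theorem over the reals: Let A be a real m×n matrix, b ∈ ℝ^m, c ∈ ℝ^n. If x* ∈ ℝ^n is a primal-feasible vector that maximizes f(x) = cᵀx over all primal-feasible vectors, and y* ∈ ℝ^m is a dual-feasible vector that minimizes g(y) = yᵀb over all dual-feasible vectors, then f(x*) = g(y*). -/
open Finset

open Finset

variable {ι : Type*} [Fintype ι] {F : Type*} [AddCommGroup F] [Module ℝ F]

theorem cara_aux (v : ι → F) :
    ∀ (N : ℕ) (a : ι → ℝ), (univ.filter fun i => a i ≠ 0).card ≤ N → 0 ≤ a →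
    ∃ b : ι → ℝ, 0 ≤ b ∧ ∑ i, b i • v i = ∑ i, a i • v i ∧
      LinearIndependent ℝ (fun i : {i // b i ≠ 0} => v i) := by
  classical
  intro N
  induction N with
  | zero =>
    intro a hcard ha
    have hz : ∀ i, a i = 0 := by
      intro i
      by_contra h
      have : i ∈ univ.filter fun i => a i ≠ 0 := by simp [h]
      have := Finset.card_pos.2 ⟨i, this⟩
      omega
    haveI : IsEmpty {i // a i ≠ 0} := ⟨fun ⟨i, hi⟩ => hi (hz i)⟩
    exact ⟨a, ha, rfl, linearIndependent_empty_type⟩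
  | succ N ih =>
    intro a hcard ha
    by_cases hli : LinearIndependent ℝ (fun i : {i // a i ≠ 0} => v i)
    · exact ⟨a, ha, rfl, hli⟩
    · -- get a dependence relation supported on the support of a, with a positive entry
      obtain ⟨c, hsupp, hsum, i1, hc1⟩ :
          ∃ c : ι → ℝ, (∀ i, a i = 0 → c i = 0) ∧ ∑ i, c i • v i = 0 ∧ ∃ i, 0 < c i := by
        obtain ⟨g, hg, j0, hj0⟩ := Fintype.not_linearIndependent_iff.1 hli
        set c0 : ι → ℝ := fun i => if h : a i ≠ 0 then g ⟨i, h⟩ else 0 with hc0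
        have hsum0 : ∑ i, c0 i • v i = 0 := by
          rw [← hg]
          rw [← Fintype.sum_subtype_add_sum_subtype (fun i => a i ≠ 0) (fun i => c0 i • v i)]
          have h2 : ∑ i : {i // ¬ a i ≠ 0}, c0 (i : ι) • v i = 0 := by
            apply Finset.sum_eq_zero
            intro i _
            simp [hc0, i.2]
          rw [h2, add_zero]
          apply Finset.sum_congr rfl
          intro i _
          simp [hc0, i.2]
        rcases lt_or_gt_of_ne hj0 with h | h
        · refine ⟨-c0, fun i hi => by simp [hc0, hi], by simpa using hsum0, j0, ?_⟩
          simpa [hc0, j0.2] using h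
        · refine ⟨c0, fun i hi => by simp [hc0, hi], hsum0, j0, ?_⟩
          simpa [hc0, j0.2] using h
      set P : Finset ι := univ.filter fun i => 0 < c i with hP
      have hPne : P.Nonempty := ⟨i1, by simp [hP, hc1]⟩
      set t : ℝ := P.inf' hPne fun i => a i / c i with ht
      obtain ⟨i0, hi0P, hi0⟩ := Finset.exists_mem_eq_inf' hPne fun i => a i / c i
      have hi0c : 0 < c i0 := by simpa [hP] using hi0P
      have htnn : 0 ≤ t := by
        rw [ht]
        apply Finset.le_inf'
        intro i hi
        have h2 : 0 < c i := by simpa [hP] using hi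
        have h3 : 0 ≤ a i := ha i
        positivity
      set a' : ι → ℝ := fun i => a i - t * c i with ha'
      have ha'nn : 0 ≤ a' := by
        intro i
        rcases le_or_gt (c i) 0 with h | h
        · have : t * c i ≤ 0 := mul_nonpos_of_nonneg_of_nonpos htnn h
          have h4 : 0 ≤ a i := ha i
          show 0 ≤ a i - t * c i
          linarith
        · have hiP : i ∈ P := by simp [hP, h]
          have : t ≤ a i / c i := by rw [ht]; exact Finset.inf'_le _ hiP
          have h5 := (le_div_iff₀ h).1 this
          show 0 ≤ a i - t * c i
          linarith
      have ha'sum : ∑ i, a' i • v i = ∑ i, a i • v i := by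
        simp only [ha', sub_smul, Finset.sum_sub_distrib, mul_smul]
        rw [← Finset.smul_sum, hsum, smul_zero, sub_zero]
      have ha'i0 : a' i0 = 0 := by
        show a i0 - t * c i0 = 0
        rw [ht, hi0]
        field_simp
        ring
      have hsub : (univ.filter fun i => a' i ≠ 0) ⊆ (univ.filter fun i => a i ≠ 0).erase i0 := by
        intro i hi
        simp only [mem_filter, mem_univ, true_and] at hi
        rw [Finset.mem_erase, mem_filter]
        refine ⟨fun h => hi (h ▸ ha'i0), mem_univ i, fun h => hi ?_⟩
        simp [ha', h, hsupp i h]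
      have hcard' : (univ.filter fun i => a' i ≠ 0).card ≤ N := by
        have h1 := Finset.card_le_card hsub
        have hi0mem : i0 ∈ univ.filter fun i => a i ≠ 0 := by
          simp only [mem_filter, mem_univ, true_and]
          intro h
          exact absurd (hsupp i0 h) (ne_of_gt hi0c)
        have := Finset.card_erase_of_mem hi0mem
        omega
      obtain ⟨b, hb, hbsum, hbli⟩ := ih a' hcard' ha'nn
      exact ⟨b, hb, hbsum.trans ha'sum, hbli⟩

theorem cara (v : ι → F) (a : ι → ℝ) (ha : 0 ≤ a) :
    ∃ b : ι → ℝ, 0 ≤ b ∧ ∑ i, b i • v i = ∑ i, a i • v i ∧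
      LinearIndependent ℝ (fun i : {i // b i ≠ 0} => v i) :=
  cara_aux v _ a le_rfl ha

variable {ι : Type*} [Fintype ι] {F : Type*} [NormedAddCommGroup F] [NormedSpace ℝ F]

theorem cone_isClosed (v : ι → F) :
    IsClosed {x : F | ∃ a : ι → ℝ, 0 ≤ a ∧ ∑ i, a i • v i = x} := by
  classical
  -- each piece indexed by a finset with linearly independent columns
  have key : {x : F | ∃ a : ι → ℝ, 0 ≤ a ∧ ∑ i, a i • v i = x} =
      ⋃ (T : {T : Finset ι // LinearIndependent ℝ (fun i : T => v i)}),
        (fun b : ({i // i ∈ (T : Finset ι)} → ℝ) => ∑ i, b i • v i) '' {b | 0 ≤ b} := by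
    ext x
    simp only [Set.mem_setOf_eq, Set.mem_iUnion, Set.mem_image]
    constructor
    · rintro ⟨a, ha, rfl⟩
      obtain ⟨b, hb, hbsum, hbli⟩ := cara v a ha
      set T : Finset ι := univ.filter fun i => b i ≠ 0 with hTdef
      have hmem : ∀ i, i ∈ T ↔ b i ≠ 0 := by intro i; simp [hTdef]
      have hli : LinearIndependent ℝ (fun i : {i // i ∈ T} => v i) := by
        have h2 := hbli.comp (Equiv.subtypeEquivRight hmem)
          (Equiv.subtypeEquivRight hmem).injective
        have h3 : ((fun i : {i // b i ≠ 0} => v i) ∘ (Equiv.subtypeEquivRight hmem)) =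
            fun i : {i // i ∈ T} => v i := by
          funext i
          simp [Equiv.subtypeEquivRight]
          rfl
        rwa [h3] at h2
      refine ⟨⟨T, hli⟩, fun i => b i, fun i => hb i, ?_⟩
      rw [← hbsum]
      calc ∑ i : {i // i ∈ T}, b (i : ι) • v (i : ι)
          = ∑ i ∈ T.attach, b (i : ι) • v (i : ι) := rfl
        _ = ∑ i ∈ T, b i • v i := Finset.sum_attach T fun i => b i • v i
        _ = ∑ i, b i • v i := by
            apply Finset.sum_subset (Finset.subset_univ T)
            intro i _ h
            rw [hmem] at h
            simp only [not_not] at h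
            simp [h]
    · rintro ⟨⟨T, hT⟩, b, hb, rfl⟩
      refine ⟨fun i => if h : i ∈ T then b ⟨i, h⟩ else 0, ?_, ?_⟩
      · intro i
        dsimp only [Pi.zero_apply]
        split
        · exact hb _
        · exact le_refl 0
      · calc ∑ i : ι, (if h : i ∈ T then b ⟨i, h⟩ else 0) • v i
            = ∑ i ∈ T, (if h : i ∈ T then b ⟨i, h⟩ else 0) • v i := by
              symm
              apply Finset.sum_subset (Finset.subset_univ T)
              intro i _ h
              simp [h]
          _ = ∑ i ∈ T.attach, (if h : (i : ι) ∈ T then b ⟨i, h⟩ else 0) • v (i : ι) :=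
              (Finset.sum_attach T fun i => (if h : i ∈ T then b ⟨i, h⟩ else 0) • v i).symm
          _ = ∑ i : {i // i ∈ T}, b i • v i := by
              apply Finset.sum_congr rfl
              intro i _
              simp [i.2]
  rw [key]
  apply isClosed_iUnion_of_finite
  rintro ⟨T, hT⟩
  set L : ({i // i ∈ T} → ℝ) →ₗ[ℝ] F :=
    { toFun := fun b => ∑ i, b i • v i
      map_add' := by intro x y; simp [add_smul, Finset.sum_add_distrib]
      map_smul' := by intro r x; simp [mul_smul, Finset.smul_sum] } with hL
  have hker : LinearMap.ker L = ⊥ := by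
    rw [LinearMap.ker_eq_bot']
    intro g hg
    exact funext fun i => Fintype.linearIndependent_iff.1 hT g hg i
  have hce := LinearMap.isClosedEmbedding_of_injective (f := L) hker
  have : IsClosed {b : {i // i ∈ T} → ℝ | 0 ≤ b} := by
    have : {b : {i // i ∈ T} → ℝ | 0 ≤ b} = Set.Ici 0 := rfl
    rw [this]; exact isClosed_Ici
  exact hce.isClosedMap _ this

open scoped InnerProductSpace in
theorem farkas_alt {ι : Type*} [Fintype ι] {F : Type*} [NormedAddCommGroup F]
    [InnerProductSpace ℝ F] [FiniteDimensional ℝ F] (v : ι → F) (d : F) :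
    (∃ a : ι → ℝ, 0 ≤ a ∧ ∑ i, a i • v i = d) ∨
    ∃ y : F, (∀ i, 0 ≤ ⟪v i, y⟫_ℝ) ∧ ⟪y, d⟫_ℝ < 0 := by
  classical
  set K : ConvexCone ℝ F :=
    { carrier := {x : F | ∃ a : ι → ℝ, 0 ≤ a ∧ ∑ i, a i • v i = x}
      smul_mem' := by
        rintro t ht x ⟨a, ha, rfl⟩
        refine ⟨fun i => t * a i, fun i => mul_nonneg ht.le (ha i), ?_⟩
        rw [Finset.smul_sum]
        apply Finset.sum_congr rfl
        intro i _
        rw [mul_smul]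
      add_mem' := by
        rintro x ⟨a, ha, rfl⟩ y ⟨a', ha', rfl⟩
        exact ⟨a + a', fun i => add_nonneg (ha i) (ha' i), by
          simp [add_smul, Finset.sum_add_distrib]⟩ } with hK
  by_cases hd : d ∈ K
  · exact Or.inl hd
  · obtain ⟨y, hy1, hy2⟩ := ProperCone.hyperplane_separation'
      (C := { toSubmodule := K.toPointedCone (show (0 : F) ∈ K from ⟨0, le_rfl, by simp⟩), isClosed' := cone_isClosed v })
      (x₀ := d) hd
    refine Or.inr ⟨y, fun i => ?_, by rwa [real_inner_comm]⟩
    apply hy1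
    show v i ∈ K
    refine ⟨Pi.single i 1, ?_, ?_⟩
    · intro j
      rw [Pi.single_apply]
      split <;> norm_num
    · simp [Pi.single_apply]
open scoped InnerProductSpace in
/-- Strong Duality Theorem over the reals. -/
theorem strong_duality_real (m n : ℕ) (A : Matrix (Fin m) (Fin n) ℝ)
    (b : Fin m → ℝ) (c : Fin n → ℝ) (xstar : Fin n → ℝ) (ystar : Fin m → ℝ)
    (hx0 : 0 ≤ xstar) (hxA : A.mulVec xstar ≤ b)
    (hxopt : ∀ x : Fin n → ℝ, 0 ≤ x → A.mulVec x ≤ b →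
      ∑ i, c i * x i ≤ ∑ i, c i * xstar i)
    (hy0 : 0 ≤ ystar) (hyA : c ≤ A.vecMul ystar)
    (hyopt : ∀ y : Fin m → ℝ, 0 ≤ y → c ≤ A.vecMul y →
      ∑ j, ystar j * b j ≤ ∑ j, y j * b j) :
    ∑ i, c i * xstar i = ∑ j, ystar j * b j := by
  classical
  set p : ℝ := ∑ i, c i * xstar i with hp
  set g : ℝ := ∑ j, ystar j * b j with hg
  -- weak duality
  have weak : p ≤ g := by
    calc p = ∑ i, c i * xstar i := rfl
      _ ≤ ∑ i, A.vecMul ystar i * xstar i := by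
          apply Finset.sum_le_sum
          intro i _
          exact mul_le_mul_of_nonneg_right (hyA i) (hx0 i)
      _ = ∑ j, ystar j * A.mulVec xstar j := by
          simp only [Matrix.vecMul, Matrix.mulVec, dotProduct, Finset.sum_mul,
            Finset.mul_sum]
          rw [Finset.sum_comm]
          apply Finset.sum_congr rfl
          intro j _
          apply Finset.sum_congr rfl
          intro i _
          ring
      _ ≤ ∑ j, ystar j * b j := by
          apply Finset.sum_le_sum
          intro j _
          exact mul_le_mul_of_nonneg_left (hxA j) (hy0 j)
  refine le_antisymm weak ?_
  by_contra hlt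
  push_neg at hlt
  -- hlt : p < g.  Set t := g and derive a contradiction via Farkas.
  set φ := WithLp.linearEquiv 2 ℝ ((Fin m ⊕ Unit) → ℝ) with hφ
  set w : (Fin n ⊕ (Fin m ⊕ Unit)) → ((Fin m ⊕ Unit) → ℝ) :=
    Sum.elim (fun j => Sum.elim (fun i => A i j) (fun _ => c j))
      (Sum.elim (fun i => Pi.single (Sum.inl i) 1)
        (fun _ => Pi.single (Sum.inr ()) (-1))) with hw
  set d0 : (Fin m ⊕ Unit) → ℝ := Sum.elim b (fun _ => g) with hd0
  have hinner : ∀ (f : (Fin m ⊕ Unit) → ℝ) (z : EuclideanSpace ℝ (Fin m ⊕ Unit)),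
      ⟪φ.symm f, z⟫_ℝ = ∑ r, f r * φ z r := by
    intro f z
    rw [PiLp.inner_apply]
    apply Finset.sum_congr rfl
    intro r _
    simp [hφ, RCLike.inner_apply, starRingEnd_apply]
    ring
  rcases farkas_alt (fun i => φ.symm (w i)) (φ.symm d0) with ⟨a, ha, hsum⟩ | ⟨y, hy1, hy2⟩
  · -- primal system with cᵀx ≥ t is feasible: contradiction with optimality of xstar
    have h1 : ∑ i, a i • w i = d0 := by
      have h2 := congrArg φ hsum
      rw [map_sum, LinearEquiv.apply_symm_apply] at h2
      simpa [map_smul] using h2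
    have hrow : ∀ r, ∑ i, a i * w i r = d0 r := by
      intro r
      have := congrFun h1 r
      simpa [Finset.sum_apply] using this
    set x : Fin n → ℝ := fun j => a (Sum.inl j) with hx
    have hxnn : 0 ≤ x := fun j => ha _
    have hxb : A.mulVec x ≤ b := by
      intro i
      have h3 := hrow (Sum.inl i)
      rw [Fintype.sum_sum_type, Fintype.sum_sum_type] at h3
      simp only [hw, Sum.elim_inl, Sum.elim_inr, Fintype.sum_unique,
        Pi.single_apply, Sum.inl.injEq, mul_ite, mul_one, mul_zero,
        Finset.sum_ite_eq, Finset.mem_univ, if_true, hd0, reduceCtorEq, if_false,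
        add_zero, mul_neg] at h3
      have h4 : (0:ℝ) ≤ a (Sum.inr (Sum.inl i)) := ha _
      have h5 : A.mulVec x i = ∑ j, a (Sum.inl j) * A i j := by
        simp only [Matrix.mulVec, dotProduct, hx]
        apply Finset.sum_congr rfl
        intro j _
        ring
      rw [h5]
      linarith [h3]
    have hxc : g ≤ ∑ j, c j * x j := by
      have h3 := hrow (Sum.inr ())
      rw [Fintype.sum_sum_type, Fintype.sum_sum_type] at h3
      simp only [hw, Sum.elim_inl, Sum.elim_inr, Fintype.sum_unique,
        Pi.single_apply, mul_ite, mul_one, mul_zero, mul_neg,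
        Finset.sum_ite_eq, Finset.sum_ite_eq', Finset.mem_univ, if_true, hd0, reduceCtorEq,
        if_false, Finset.sum_const_zero, zero_add, add_zero, PUnit.default_eq_unit] at h3
      have h4 : (0:ℝ) ≤ a (Sum.inr (Sum.inr ())) := ha _
      have h5 : ∑ j, c j * x j = ∑ j, a (Sum.inl j) * c j := by
        simp only [hx]
        apply Finset.sum_congr rfl; intro j _; ring
      rw [h5]
      linarith [h3]
    have := hxopt x hxnn hxb
    linarith
  · -- dual direction
    set Y : (Fin m ⊕ Unit) → ℝ := φ y with hY
    have hC : ∀ i, 0 ≤ ∑ r, w i r * Y r := by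
      intro i
      have := hy1 i
      rwa [hinner] at this
    have hC4 : ∑ r, d0 r * Y r < 0 := by
      have := hy2
      rw [real_inner_comm, hinner] at this
      exact this
    set yv : Fin m → ℝ := fun i => Y (Sum.inl i) with hyv
    set μ : ℝ := -Y (Sum.inr ()) with hμ
    have hC1 : ∀ j, μ * c j ≤ ∑ i, A i j * yv i := by
      intro j
      have h3 := hC (Sum.inl j)
      rw [Fintype.sum_sum_type] at h3
      simp only [hw, Sum.elim_inl, Sum.elim_inr, Fintype.sum_unique,
        PUnit.default_eq_unit] at h3
      simp only [hyv, hμ]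
      nlinarith [h3]
    have hC2 : 0 ≤ yv := by
      intro i
      have h3 := hC (Sum.inr (Sum.inl i))
      rw [Fintype.sum_sum_type] at h3
      simp only [hw, Sum.elim_inl, Sum.elim_inr, Fintype.sum_unique,
        PUnit.default_eq_unit, Pi.single_apply, Sum.inl.injEq, ite_mul, one_mul, zero_mul,
        reduceCtorEq, if_false, Finset.sum_ite_eq, Finset.sum_ite_eq', Finset.mem_univ,
        if_true, add_zero, Finset.sum_const_zero, zero_add] at h3
      show (0:ℝ) ≤ yv i
      simp only [hyv]
      linarith [h3]
    have hC3 : 0 ≤ μ := by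
      have h3 := hC (Sum.inr (Sum.inr ()))
      rw [Fintype.sum_sum_type] at h3
      simp only [hw, Sum.elim_inl, Sum.elim_inr, Fintype.sum_unique,
        PUnit.default_eq_unit, Pi.single_apply, ite_mul, one_mul, zero_mul, neg_one_mul,
        reduceCtorEq, if_false, Finset.sum_ite_eq, Finset.sum_ite_eq', Finset.mem_univ,
        if_true, Finset.sum_const_zero, zero_add, add_zero] at h3
      rw [hμ]
      linarith [h3]
    have hC4' : ∑ i, b i * yv i < μ * g := by
      rw [Fintype.sum_sum_type] at hC4
      simp only [hd0, Sum.elim_inl, Sum.elim_inr, Fintype.sum_unique,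
        PUnit.default_eq_unit] at hC4
      simp only [hyv, hμ]
      nlinarith [hC4]
    rcases eq_or_lt_of_le hC3 with hμ0 | hμ0
    · -- μ = 0 : improve the dual solution ystar by adding yv
      have hyv0 : ∑ i, b i * yv i < 0 := by
        rw [← hμ0, zero_mul] at hC4'
        exact hC4'
      have hfeas : c ≤ A.vecMul (ystar + yv) := by
        intro j
        have h6 : A.vecMul (ystar + yv) j = A.vecMul ystar j + ∑ i, yv i * A i j := by
          simp [Matrix.vecMul, dotProduct, add_mul, Finset.sum_add_distrib, Pi.add_apply]
        have h7 : ∑ i, yv i * A i j = ∑ i, A i j * yv i := by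
          apply Finset.sum_congr rfl; intro i _; ring
        have h8 := hC1 j
        rw [← hμ0, zero_mul] at h8
        rw [h6, h7]
        linarith [hyA j]
      have h9 := hyopt (ystar + yv) (by intro i; exact add_nonneg (hy0 i) (hC2 i)) hfeas
      have h10 : ∑ j, (ystar + yv) j * b j = g + ∑ j, b j * yv j := by
        rw [hg]
        rw [← Finset.sum_add_distrib]
        apply Finset.sum_congr rfl
        intro j _
        simp [Pi.add_apply]
        ring
      rw [h10] at h9
      linarith
    · -- μ > 0 : scale yv to get a dual solution better than ystar
      set y2 : Fin m → ℝ := fun i => μ⁻¹ * yv i with hy2def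
      have hy2nn : 0 ≤ y2 := by
        intro i
        exact mul_nonneg (inv_nonneg.2 hC3) (hC2 i)
      have hfeas : c ≤ A.vecMul y2 := by
        intro j
        have h6 : A.vecMul y2 j = μ⁻¹ * ∑ i, yv i * A i j := by
          simp [Matrix.vecMul, dotProduct, hy2def, Finset.mul_sum, mul_assoc]
        have h7 : ∑ i, yv i * A i j = ∑ i, A i j * yv i := by
          apply Finset.sum_congr rfl; intro i _; ring
        rw [h6, h7]
        have h8 := hC1 j
        have := mul_le_mul_of_nonneg_left h8 (inv_nonneg.2 hC3)
        calc c j = μ⁻¹ * (μ * c j) := by field_simp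
          _ ≤ μ⁻¹ * ∑ i, A i j * yv i := this
      have h9 := hyopt y2 hy2nn hfeas
      have h10 : ∑ j, y2 j * b j = μ⁻¹ * ∑ j, b j * yv j := by
        rw [Finset.mul_sum]
        apply Finset.sum_congr rfl
        intro j _
        simp [hy2def]
        ring
      have h11 : μ⁻¹ * ∑ j, b j * yv j < μ⁻¹ * (μ * g) :=
        mul_lt_mul_of_pos_left hC4' (inv_pos.2 hμ0)
      have h12 : μ⁻¹ * (μ * g) = g := by field_simp
      rw [h10] at h9
      rw [h12] at h11
      linarith
end

section
/- Existence-Duality Theorem over the reals: Let A be a real m×n matrix, b ∈ ℝ^m, c ∈ ℝ^n. Then exactly one of the following holds: (1) both the primal and dual programs are infeasible; (2) the primal program is infeasible and the dual program is unbounded (the dual objective takes values below every real number on the dual-feasible set); (3) the dual program is infeasible and the primal program is unbounded (the primal objective takes values above every real number on the primal-feasible set); (4) there exist a primal-feasible x* maximizing the primal objective over the primal-feasible set and a dual-feasible y* minimizing the dual objective over the dual-feasible set. -/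
open Finset

lemma dot_sub_smul {ι : Type*} [Fintype ι] (z y v : ι → ℝ) (β : ℝ) :
    ∑ k, (z k - β * y k) * v k = (∑ k, z k * v k) - β * ∑ k, y k * v k := by
  rw [Finset.mul_sum, ← Finset.sum_sub_distrib]
  congr 1; ext k; ring

lemma dot_sub_smul' {ι : Type*} [Fintype ι] (z y v : ι → ℝ) (β : ℝ) :
    ∑ k, z k * (v k - β * y k) = (∑ k, z k * v k) - β * ∑ k, z k * y k := by
  rw [Finset.mul_sum, ← Finset.sum_sub_distrib]
  congr 1; ext k; ring

/-- Farkas lemma, equality form, by induction on the number of generators. -/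
lemma farkas_eq : ∀ (n : ℕ) {ι : Type} [Fintype ι] (a : Fin n → ι → ℝ) (b : ι → ℝ),
    (∃ x : Fin n → ℝ, (∀ i, 0 ≤ x i) ∧ ∀ k, ∑ i, x i * a i k = b k) ∨
    (∃ y : ι → ℝ, (∀ i, 0 ≤ ∑ k, y k * a i k) ∧ ∑ k, y k * b k < 0) := by
  intro n
  induction n with
  | zero =>
    intro ι _ a b
    by_cases hb : ∀ k, b k = 0
    · exact Or.inl ⟨0, fun i => le_refl _, fun k => by simp [hb k]⟩
    · push_neg at hb
      obtain ⟨k0, hk0⟩ := hb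
      refine Or.inr ⟨fun k => -b k, fun i => i.elim0, ?_⟩
      have : ∑ k, (-b k) * b k = -∑ k, b k ^ 2 := by
        rw [← Finset.sum_neg_distrib]; congr 1; ext k; ring
      rw [this, neg_neg_iff_pos]
      exact Finset.sum_pos' (fun k _ => sq_nonneg _) ⟨k0, Finset.mem_univ _, by positivity⟩
  | succ n IH =>
    intro ι _ a b
    rcases IH (fun i => a i.castSucc) b with ⟨x, hx, hxe⟩ | ⟨y, hy, hyb⟩
    · exact Or.inl ⟨Fin.snoc x 0, Fin.lastCases (by simp) (by simp [hx]),
        fun k => by rw [Fin.sum_univ_castSucc]; simpa using hxe k⟩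
    · rcases le_or_gt 0 (∑ k, y k * a (Fin.last n) k) with hα0 | hα0
      · exact Or.inr ⟨y, Fin.lastCases hα0 hy, hyb⟩
      set α : ℝ := ∑ k, y k * a (Fin.last n) k with hα
      have hαne : α ≠ 0 := ne_of_lt hα0
      rcases IH (fun i k => a i.castSucc k - ((∑ k', y k' * a i.castSucc k') / α) * a (Fin.last n) k)
          (fun k => b k - (∑ k', y k' * b k') / α * a (Fin.last n) k) with
        ⟨x, hx, hxe⟩ | ⟨z, hz, hzb⟩
      · -- reconstruct a nonneg combination
        set μ : ℝ := (∑ k', y k' * b k') / α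
            - ∑ i, x i * ((∑ k', y k' * a i.castSucc k') / α) with hμ
        refine Or.inl ⟨Fin.snoc x μ, ?_, ?_⟩
        · refine Fin.lastCases ?_ (by simp [hx])
          simp only [Fin.snoc_last, hμ]
          have h1 : 0 ≤ (∑ k', y k' * b k') / α := div_nonneg_of_nonpos (le_of_lt hyb) hα0.le
          have h2 : ∑ i, x i * ((∑ k', y k' * a i.castSucc k') / α) ≤ 0 := by
            apply Finset.sum_nonpos
            intro i _
            exact mul_nonpos_of_nonneg_of_nonpos (hx i)
              (div_nonpos_of_nonneg_of_nonpos (hy i) hα0.le)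
          linarith
        · intro k
          rw [Fin.sum_univ_castSucc]
          simp only [Fin.snoc_castSucc, Fin.snoc_last]
          have h := hxe k
          have expand : ∑ i, x i * (a i.castSucc k
                - (∑ k', y k' * a i.castSucc k') / α * a (Fin.last n) k)
              = ∑ i, x i * a i.castSucc k
                - (∑ i, x i * ((∑ k', y k' * a i.castSucc k') / α)) * a (Fin.last n) k := by
            rw [Finset.sum_mul, ← Finset.sum_sub_distrib]; congr 1; ext i; ring
          rw [expand] at h
          rw [hμ]
          linarith [h]
      · refine Or.inr ⟨fun k => z k - (∑ k', z k' * a (Fin.last n) k') / α * y k, ?_, ?_⟩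
        · refine Fin.lastCases ?_ ?_
          · rw [dot_sub_smul, ← hα, div_mul_cancel₀ _ hαne, sub_self]
          · intro i
            rw [dot_sub_smul]
            have h := hz i
            rw [dot_sub_smul'] at h
            have key : (∑ k', z k' * a (Fin.last n) k') / α * ∑ k, y k * a i.castSucc k
                = (∑ k', y k' * a i.castSucc k') / α * ∑ k, z k * a (Fin.last n) k := by
              field_simp
            linarith [h, key]
        · rw [dot_sub_smul]
          have h := hzb
          rw [dot_sub_smul'] at h
          have key : (∑ k', z k' * a (Fin.last n) k') / α * ∑ k, y k * b k
              = (∑ k', y k' * b k') / α * ∑ k, z k * a (Fin.last n) k := by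
            field_simp
          linarith [h, key]

lemma farkas_eq_gen {κ ι : Type} [Fintype κ] [Fintype ι] (a : κ → ι → ℝ) (b : ι → ℝ) :
    (∃ x : κ → ℝ, (∀ i, 0 ≤ x i) ∧ ∀ k, ∑ i, x i * a i k = b k) ∨
    (∃ y : ι → ℝ, (∀ i, 0 ≤ ∑ k, y k * a i k) ∧ ∑ k, y k * b k < 0) := by
  set e := Fintype.equivFin κ with he
  rcases farkas_eq (Fintype.card κ) (fun i => a (e.symm i)) b with ⟨x, hx, hxe⟩ | ⟨y, hy, hyb⟩
  · refine Or.inl ⟨fun j => x (e j), fun j => hx (e j), fun k => ?_⟩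
    rw [← hxe k]
    exact Fintype.sum_equiv e _ _ (fun j => by simp)
  · exact Or.inr ⟨y, fun i => by simpa using hy (e i), hyb⟩

lemma farkas_ineq {κ ι : Type} [Fintype κ] [Fintype ι] [DecidableEq ι]
    (M : ι → κ → ℝ) (d : ι → ℝ) :
    (∃ x : κ → ℝ, (∀ j, 0 ≤ x j) ∧ ∀ i, ∑ j, M i j * x j ≤ d i) ∨
    (∃ u : ι → ℝ, (∀ i, 0 ≤ u i) ∧ (∀ j, 0 ≤ ∑ i, u i * M i j) ∧ ∑ i, u i * d i < 0) := by
  rcases farkas_eq_gen (κ := κ ⊕ ι)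
      (Sum.elim (fun j k => M k j) (fun i' => Pi.single i' 1)) d with
    ⟨x, hx, hxe⟩ | ⟨y, hy, hyb⟩
  · refine Or.inl ⟨fun j => x (Sum.inl j), fun j => hx _, fun i => ?_⟩
    have h := hxe i
    rw [Fintype.sum_sum_type] at h
    have h2 : ∑ i', x (Sum.inr i') * Sum.elim (fun j k => M k j) (fun i' => Pi.single i' 1)
        (Sum.inr i') i = x (Sum.inr i) := by
      simp [Pi.single_apply]
    rw [h2] at h
    have : ∑ j, M i j * x (Sum.inl j)
        = ∑ j, x (Sum.inl j) * Sum.elim (fun j k => M k j) (fun i' => Pi.single i' 1)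
          (Sum.inl j) i := by
      apply Finset.sum_congr rfl; intros; simp [mul_comm]
    rw [this]
    linarith [hx (Sum.inr i)]
  · refine Or.inr ⟨y, ?_, ?_, hyb⟩
    · intro i
      have := hy (Sum.inr i)
      simpa [Pi.single_apply] using this
    · intro j
      have := hy (Sum.inl j)
      simpa [mul_comm] using this

lemma weak_duality {m n : ℕ} (A : Matrix (Fin m) (Fin n) ℝ) (b : Fin m → ℝ) (c : Fin n → ℝ)
    {x : Fin n → ℝ} {y : Fin m → ℝ} (hx1 : 0 ≤ x) (hx2 : A.mulVec x ≤ b)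
    (hy1 : 0 ≤ y) (hy2 : c ≤ A.vecMul y) :
    ∑ j, c j * x j ≤ ∑ i, y i * b i := by
  have h1 : ∑ j, c j * x j ≤ ∑ j, (A.vecMul y j) * x j :=
    Finset.sum_le_sum fun j _ => mul_le_mul_of_nonneg_right (hy2 j) (hx1 j)
  have h3 : ∑ i, y i * A.mulVec x i ≤ ∑ i, y i * b i :=
    Finset.sum_le_sum fun i _ => mul_le_mul_of_nonneg_left (hx2 i) (hy1 i)
  have h2 : ∑ j, A.vecMul y j * x j = ∑ i, y i * A.mulVec x i := by
    simp only [Matrix.vecMul, Matrix.mulVec, dotProduct, Finset.sum_mul, Finset.mul_sum]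
    rw [Finset.sum_comm]
    exact Finset.sum_congr rfl fun i _ => Finset.sum_congr rfl fun j _ => by ring
  linarith

lemma mulVec_apply' {m n : ℕ} (A : Matrix (Fin m) (Fin n) ℝ) (x : Fin n → ℝ) (i : Fin m) :
    A.mulVec x i = ∑ j, A i j * x j := rfl

lemma vecMul_apply' {m n : ℕ} (A : Matrix (Fin m) (Fin n) ℝ) (y : Fin m → ℝ) (j : Fin n) :
    A.vecMul y j = ∑ i, y i * A i j := rfl

lemma primal_unbounded {m n : ℕ} (A : Matrix (Fin m) (Fin n) ℝ) (b : Fin m → ℝ)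
    (c : Fin n → ℝ) (x0 : Fin n → ℝ) (hx01 : 0 ≤ x0) (hx02 : A.mulVec x0 ≤ b)
    (hD : ¬∃ y : Fin m → ℝ, 0 ≤ y ∧ c ≤ A.vecMul y) :
    ∀ M : ℝ, ∃ x, (0 ≤ x ∧ A.mulVec x ≤ b) ∧ M < ∑ j, c j * x j := by
  rcases farkas_ineq (fun (j : Fin n) (i : Fin m) => -A i j) (fun j => -c j) with
    ⟨y, hy, hye⟩ | ⟨u, hu, huM, hud⟩
  · exact absurd ⟨y, fun i => hy i, fun j => by
      have := hye j
      rw [vecMul_apply']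
      simp only [neg_mul, Finset.sum_neg_distrib] at this
      have : c j ≤ ∑ i, A i j * y i := by linarith
      calc c j ≤ ∑ i, A i j * y i := this
        _ = ∑ i, y i * A i j := Finset.sum_congr rfl fun i _ => mul_comm _ _⟩ hD
  · -- u ≥ 0, A u ≤ 0, c⬝u > 0
    have hAu : ∀ i, ∑ j, A i j * u j ≤ 0 := by
      intro i
      have := huM i
      simp only [mul_neg, Finset.sum_neg_distrib, le_neg, neg_zero] at this
      calc ∑ j, A i j * u j = ∑ j, u j * A i j := Finset.sum_congr rfl fun j _ => mul_comm _ _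
        _ ≤ 0 := this
    have hcu : 0 < ∑ j, c j * u j := by
      simp only [mul_neg, Finset.sum_neg_distrib, neg_neg] at hud
      have : ∑ j, u j * c j = ∑ j, c j * u j := Finset.sum_congr rfl fun j _ => mul_comm _ _
      linarith [hud, this.symm.le]
    intro M
    set σ := ∑ j, c j * u j with hσ
    set t := (|M| + |∑ j, c j * x0 j| + 1) / σ with ht
    have ht0 : 0 ≤ t := by positivity
    refine ⟨fun j => x0 j + t * u j, ⟨?_, ?_⟩, ?_⟩
    · intro j
      have h1 := mul_nonneg ht0 (hu j)
      have h2 : (0:ℝ) ≤ x0 j := by simpa using hx01 j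
      simp only [Pi.zero_apply]
      linarith
    · intro i
      rw [mulVec_apply']
      have hexp : ∑ j, A i j * (x0 j + t * u j)
          = (∑ j, A i j * x0 j) + t * ∑ j, A i j * u j := by
        rw [Finset.mul_sum, ← Finset.sum_add_distrib]
        exact Finset.sum_congr rfl fun j _ => by ring
      rw [hexp]
      have h1 : A.mulVec x0 i ≤ b i := hx02 i
      rw [mulVec_apply'] at h1
      nlinarith [hAu i]
    · have hexp : ∑ j, c j * (x0 j + t * u j)
          = (∑ j, c j * x0 j) + t * σ := by
        rw [hσ, Finset.mul_sum, ← Finset.sum_add_distrib]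
        exact Finset.sum_congr rfl fun j _ => by ring
      rw [hexp, ht, div_mul_cancel₀ _ (ne_of_gt hcu)]
      have := abs_nonneg M
      have := le_abs_self M
      have := neg_abs_le (∑ j, c j * x0 j)
      linarith

lemma dual_unbounded {m n : ℕ} (A : Matrix (Fin m) (Fin n) ℝ) (b : Fin m → ℝ)
    (c : Fin n → ℝ) (y0 : Fin m → ℝ) (hy01 : 0 ≤ y0) (hy02 : c ≤ A.vecMul y0)
    (hP : ¬∃ x : Fin n → ℝ, 0 ≤ x ∧ A.mulVec x ≤ b) :
    ∀ M : ℝ, ∃ y, (0 ≤ y ∧ c ≤ A.vecMul y) ∧ ∑ i, y i * b i < M := by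
  rcases farkas_ineq (fun (i : Fin m) (j : Fin n) => A i j) b with
    ⟨x, hx, hxe⟩ | ⟨u, hu, huM, hud⟩
  · exact absurd ⟨x, fun j => hx j, fun i => by rw [mulVec_apply']; exact hxe i⟩ hP
  · -- u ≥ 0, Aᵀu ≥ 0, b⬝u < 0
    intro M
    set β := ∑ i, u i * b i with hβ
    set t := (|M| + |∑ i, y0 i * b i| + 1) / (-β) with ht
    have hβ0 : β < 0 := hud
    have ht0 : 0 ≤ t := by
      apply div_nonneg (by positivity) (by linarith)
    refine ⟨fun i => y0 i + t * u i, ⟨?_, ?_⟩, ?_⟩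
    · intro i
      have h1 := mul_nonneg ht0 (hu i)
      have h2 : (0:ℝ) ≤ y0 i := by simpa using hy01 i
      simp only [Pi.zero_apply]
      linarith
    · intro j
      rw [vecMul_apply']
      have hexp : ∑ i, (y0 i + t * u i) * A i j
          = (∑ i, y0 i * A i j) + t * ∑ i, u i * A i j := by
        rw [Finset.mul_sum, ← Finset.sum_add_distrib]
        exact Finset.sum_congr rfl fun i _ => by ring
      rw [hexp]
      have h1 : c j ≤ A.vecMul y0 j := hy02 j
      rw [vecMul_apply'] at h1
      nlinarith [huM j]
    · have hexp : ∑ i, (y0 i + t * u i) * b i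
          = (∑ i, y0 i * b i) + t * β := by
        rw [hβ, Finset.mul_sum, ← Finset.sum_add_distrib]
        exact Finset.sum_congr rfl fun i _ => by ring
      rw [hexp]
      have hne : -β ≠ 0 := by linarith
      have hcan := div_mul_cancel₀ (|M| + |∑ i, y0 i * b i| + 1) hne
      have htβ : t * β = -(|M| + |∑ i, y0 i * b i| + 1) := by
        rw [ht]; linear_combination (-1 : ℝ) * hcan
      rw [htβ]
      have := neg_abs_le M
      have := le_abs_self (∑ i, y0 i * b i)
      linarith


lemma sum_exchange {m n : ℕ} (B : Fin m → Fin n → ℝ) (p : Fin m → ℝ) (x : Fin n → ℝ) :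
    ∑ j, (∑ i, p i * B i j) * x j = ∑ i, p i * ∑ j, B i j * x j := by
  simp only [Finset.sum_mul, Finset.mul_sum]
  rw [Finset.sum_comm]
  exact Finset.sum_congr rfl fun i _ => Finset.sum_congr rfl fun j _ => by ring

lemma both_feasible_opt {m n : ℕ} (A : Matrix (Fin m) (Fin n) ℝ) (b : Fin m → ℝ)
    (c : Fin n → ℝ) (x0 : Fin n → ℝ) (hx01 : 0 ≤ x0) (hx02 : A.mulVec x0 ≤ b)
    (y0 : Fin m → ℝ) (hy01 : 0 ≤ y0) (hy02 : c ≤ A.vecMul y0) :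
    (∃ xs, (0 ≤ xs ∧ A.mulVec xs ≤ b) ∧
      ∀ x, (0 ≤ x ∧ A.mulVec x ≤ b) → ∑ j, c j * x j ≤ ∑ j, c j * xs j) ∧
    (∃ ys, (0 ≤ ys ∧ c ≤ A.vecMul ys) ∧
      ∀ y, (0 ≤ y ∧ c ≤ A.vecMul y) → ∑ i, ys i * b i ≤ ∑ i, y i * b i) := by
  classical
  -- combined system over variables (x, y), constraints (Ax ≤ b, -Aᵀy ≤ -c, -cᵀx + bᵀy ≤ 0)
  set Mat : (Fin m ⊕ (Fin n ⊕ Unit)) → (Fin n ⊕ Fin m) → ℝ :=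
    Sum.elim (fun i => Sum.elim (fun j => A i j) (fun _ => 0))
      (Sum.elim (fun j => Sum.elim (fun _ => 0) (fun i => -A i j))
        (fun _ => Sum.elim (fun j => -c j) (fun i => b i))) with hMat
  set d : (Fin m ⊕ (Fin n ⊕ Unit)) → ℝ :=
    Sum.elim b (Sum.elim (fun j => -c j) (fun _ => 0)) with hd
  rcases farkas_ineq Mat d with ⟨z, hz, hze⟩ | ⟨u, hu, huM, hud⟩
  · -- solution of the combined system: both optima
    set x := fun j => z (Sum.inl j) with hx
    set y := fun i => z (Sum.inr i) with hy
    have hxf1 : 0 ≤ x := fun j => hz _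
    have hyf1 : 0 ≤ y := fun i => hz _
    have hxf2 : A.mulVec x ≤ b := by
      intro i
      have h := hze (Sum.inl i)
      rw [Fintype.sum_sum_type] at h
      simp only [hMat, hd, Sum.elim_inl, Sum.elim_inr, zero_mul, Finset.sum_const_zero,
        add_zero] at h
      rw [mulVec_apply']
      exact h
    have hyf2 : c ≤ A.vecMul y := by
      intro j
      have h := hze (Sum.inr (Sum.inl j))
      rw [Fintype.sum_sum_type] at h
      simp only [hMat, hd, Sum.elim_inl, Sum.elim_inr, zero_mul, Finset.sum_const_zero,
        zero_add, neg_mul, Finset.sum_neg_distrib, le_neg, neg_neg] at h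
      rw [vecMul_apply']
      calc c j ≤ ∑ i, A i j * z (Sum.inr i) := by linarith
        _ = ∑ i, y i * A i j := Finset.sum_congr rfl fun i _ => by rw [hy]; ring
    have hkey : ∑ i, y i * b i ≤ ∑ j, c j * x j := by
      have h := hze (Sum.inr (Sum.inr ()))
      rw [Fintype.sum_sum_type] at h
      simp only [hMat, hd, Sum.elim_inl, Sum.elim_inr, neg_mul, Finset.sum_neg_distrib] at h
      have e1 : ∑ i, b i * z (Sum.inr i) = ∑ i, y i * b i :=
        Finset.sum_congr rfl fun i _ => by rw [hy]; ring
      have e2 : ∑ j, c j * z (Sum.inl j) = ∑ j, c j * x j :=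
        Finset.sum_congr rfl fun j _ => by rw [hx]
      linarith
    refine ⟨⟨x, ⟨hxf1, hxf2⟩, fun x' hx' => ?_⟩, ⟨y, ⟨hyf1, hyf2⟩, fun y' hy' => ?_⟩⟩
    · calc ∑ j, c j * x' j ≤ ∑ i, y i * b i := weak_duality A b c hx'.1 hx'.2 hyf1 hyf2
        _ ≤ ∑ j, c j * x j := hkey
    · calc ∑ i, y i * b i ≤ ∑ j, c j * x j := hkey
        _ ≤ ∑ i, y' i * b i := weak_duality A b c hxf1 hxf2 hy'.1 hy'.2
  · -- certificate: contradiction with feasibility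
    exfalso
    set p := fun i => u (Sum.inl i) with hp
    set q := fun j => u (Sum.inr (Sum.inl j)) with hq
    set lam := u (Sum.inr (Sum.inr default)) with hlam
    have hp0 : ∀ i, 0 ≤ p i := fun i => hu _
    have hq0 : ∀ j, 0 ≤ q j := fun j => hu _
    have hlam0 : 0 ≤ lam := hu _
    have hcol1 : ∀ j, lam * c j ≤ ∑ i, p i * A i j := by
      intro j
      have h := huM (Sum.inl j)
      rw [Fintype.sum_sum_type, Fintype.sum_sum_type] at h
      simp only [hMat, Sum.elim_inl, Sum.elim_inr, mul_zero, Finset.sum_const_zero,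
        Finset.univ_unique, Finset.sum_singleton, mul_neg, add_zero, zero_add] at h
      simp only [hp, hlam]
      linarith [h]
    have hcol2 : ∀ i, ∑ j, A i j * q j ≤ lam * b i := by
      intro i
      have h := huM (Sum.inr i)
      rw [Fintype.sum_sum_type, Fintype.sum_sum_type] at h
      simp only [hMat, Sum.elim_inl, Sum.elim_inr, mul_zero, Finset.sum_const_zero,
        Finset.univ_unique, Finset.sum_singleton, mul_neg, add_zero, zero_add,
        Finset.sum_neg_distrib] at h
      simp only [hq, hlam]
      have e : ∑ j, u (Sum.inr (Sum.inl j)) * A i j = ∑ j, A i j * u (Sum.inr (Sum.inl j)) :=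
        Finset.sum_congr rfl fun j _ => mul_comm _ _
      linarith [h, e]
    have hobj : ∑ i, p i * b i < ∑ j, c j * q j := by
      have h := hud
      rw [Fintype.sum_sum_type, Fintype.sum_sum_type] at h
      simp only [hd, Sum.elim_inl, Sum.elim_inr, mul_zero, Finset.sum_const_zero,
        Finset.univ_unique, Finset.sum_singleton, mul_neg, add_zero,
        Finset.sum_neg_distrib] at h
      simp only [hp, hq]
      have e : ∑ j, u (Sum.inr (Sum.inl j)) * c j = ∑ j, c j * u (Sum.inr (Sum.inl j)) :=
        Finset.sum_congr rfl fun j _ => mul_comm _ _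
      linarith [h, e]
    rcases eq_or_lt_of_le hlam0 with hlz | hlpos
    · -- lam = 0 case
      have h1 : 0 ≤ ∑ i, p i * b i := by
        have s1 : 0 ≤ ∑ j, (∑ i, p i * A i j) * x0 j := by
          apply Finset.sum_nonneg
          intro j _
          apply mul_nonneg _ (hx01 j)
          have := hcol1 j
          rw [← hlz] at this
          simpa using this
        rw [sum_exchange (B := A)] at s1
        have s2 : ∑ i, p i * (∑ j, A i j * x0 j) ≤ ∑ i, p i * b i := by
          apply Finset.sum_le_sum
          intro i _
          exact mul_le_mul_of_nonneg_left (by rw [← mulVec_apply']; exact hx02 i) (hp0 i)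
        linarith
      have h2 : ∑ j, c j * q j ≤ 0 := by
        have s1 : ∑ j, c j * q j ≤ ∑ j, (∑ i, y0 i * A i j) * q j := by
          apply Finset.sum_le_sum
          intro j _
          apply mul_le_mul_of_nonneg_right _ (hq0 j)
          rw [← vecMul_apply']
          exact hy02 j
        rw [sum_exchange (B := A)] at s1
        have s2 : ∑ i, y0 i * (∑ j, A i j * q j) ≤ 0 := by
          apply Finset.sum_nonpos
          intro i _
          apply mul_nonpos_of_nonneg_of_nonpos (hy01 i)
          have := hcol2 i
          rw [← hlz] at this
          simpa using this
        linarith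
      linarith
    · -- lam > 0 case: scaled solutions violate weak duality
      set x1 := fun j => lam⁻¹ * q j with hx1
      set y1 := fun i => lam⁻¹ * p i with hy1
      have hlne : lam ≠ 0 := ne_of_gt hlpos
      have hx1f : 0 ≤ x1 ∧ A.mulVec x1 ≤ b := by
        constructor
        · intro j; exact mul_nonneg (by positivity) (hq0 j)
        · intro i
          rw [mulVec_apply']
          have e : ∑ j, A i j * x1 j = lam⁻¹ * ∑ j, A i j * q j := by
            rw [Finset.mul_sum]
            exact Finset.sum_congr rfl fun j _ => by rw [hx1]; ring
          rw [e]
          have := hcol2 i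
          calc lam⁻¹ * ∑ j, A i j * q j ≤ lam⁻¹ * (lam * b i) :=
                mul_le_mul_of_nonneg_left this (by positivity)
            _ = b i := by field_simp
      have hy1f : 0 ≤ y1 ∧ c ≤ A.vecMul y1 := by
        constructor
        · intro i; exact mul_nonneg (by positivity) (hp0 i)
        · intro j
          rw [vecMul_apply']
          have e : ∑ i, y1 i * A i j = lam⁻¹ * ∑ i, p i * A i j := by
            rw [Finset.mul_sum]
            exact Finset.sum_congr rfl fun i _ => by rw [hy1]; ring
          rw [e]
          have := hcol1 j
          calc c j = lam⁻¹ * (lam * c j) := by field_simp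
            _ ≤ lam⁻¹ * ∑ i, p i * A i j :=
                mul_le_mul_of_nonneg_left this (by positivity)
      have hwd := weak_duality A b c hx1f.1 hx1f.2 hy1f.1 hy1f.2
      have e1 : ∑ j, c j * x1 j = lam⁻¹ * ∑ j, c j * q j := by
        rw [Finset.mul_sum]
        exact Finset.sum_congr rfl fun j _ => by rw [hx1]; ring
      have e2 : ∑ i, y1 i * b i = lam⁻¹ * ∑ i, p i * b i := by
        rw [Finset.mul_sum]
        exact Finset.sum_congr rfl fun i _ => by rw [hy1]; ring
      rw [e1, e2] at hwd
      have := mul_lt_mul_of_pos_left hobj (inv_pos.mpr hlpos)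
      linarith
/-- Existence-Duality Theorem over the reals: exactly one of the four cases holds. -/
theorem existence_duality_real (m n : ℕ) (A : Matrix (Fin m) (Fin n) ℝ)
    (b : Fin m → ℝ) (c : Fin n → ℝ) :
    let PrimalFeasible : (Fin n → ℝ) → Prop := fun x => 0 ≤ x ∧ A.mulVec x ≤ b
    let DualFeasible : (Fin m → ℝ) → Prop := fun y => 0 ≤ y ∧ c ≤ A.vecMul y
    let f : (Fin n → ℝ) → ℝ := fun x => ∑ i, c i * x i
    let g : (Fin m → ℝ) → ℝ := fun y => ∑ j, y j * b j
    let C1 : Prop := (¬∃ x, PrimalFeasible x) ∧ (¬∃ y, DualFeasible y)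
    let C2 : Prop := (¬∃ x, PrimalFeasible x) ∧ (∀ M : ℝ, ∃ y, DualFeasible y ∧ g y < M)
    let C3 : Prop := (¬∃ y, DualFeasible y) ∧ (∀ M : ℝ, ∃ x, PrimalFeasible x ∧ M < f x)
    let C4 : Prop := (∃ xstar, PrimalFeasible xstar ∧ ∀ x, PrimalFeasible x → f x ≤ f xstar) ∧
              (∃ ystar, DualFeasible ystar ∧ ∀ y, DualFeasible y → g ystar ≤ g y)
    (C1 ∧ ¬C2 ∧ ¬C3 ∧ ¬C4) ∨ (C2 ∧ ¬C1 ∧ ¬C3 ∧ ¬C4) ∨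
    (C3 ∧ ¬C1 ∧ ¬C2 ∧ ¬C4) ∨ (C4 ∧ ¬C1 ∧ ¬C2 ∧ ¬C3) := by
  intro PrimalFeasible DualFeasible f g C1 C2 C3 C4
  by_cases hP : ∃ x : Fin n → ℝ, 0 ≤ x ∧ A.mulVec x ≤ b
  · by_cases hD : ∃ y : Fin m → ℝ, 0 ≤ y ∧ c ≤ A.vecMul y
    · -- both feasible : C4
      obtain ⟨x0, hx01, hx02⟩ := hP
      obtain ⟨y0, hy01, hy02⟩ := hD
      obtain ⟨⟨xs, hxs, hxsopt⟩, ⟨ys, hys, hysopt⟩⟩ :=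
        both_feasible_opt A b c x0 hx01 hx02 y0 hy01 hy02
      refine Or.inr (Or.inr (Or.inr ⟨⟨⟨xs, hxs, hxsopt⟩, ⟨ys, hys, hysopt⟩⟩,
        fun h => h.1 ⟨x0, hx01, hx02⟩, fun h => h.1 ⟨x0, hx01, hx02⟩,
        fun h => h.1 ⟨y0, hy01, hy02⟩⟩))
    · -- primal feasible, dual infeasible : C3
      obtain ⟨x0, hx01, hx02⟩ := hP
      refine Or.inr (Or.inr (Or.inl ⟨⟨hD, fun M => ?_⟩,
        fun h => h.1 ⟨x0, hx01, hx02⟩,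
        fun h => hD ⟨(h.2 0).choose, (h.2 0).choose_spec.1⟩,
        fun h => hD ⟨h.2.choose, h.2.choose_spec.1⟩⟩))
      exact primal_unbounded A b c x0 hx01 hx02 hD M
  · by_cases hD : ∃ y : Fin m → ℝ, 0 ≤ y ∧ c ≤ A.vecMul y
    · -- dual feasible, primal infeasible : C2
      obtain ⟨y0, hy01, hy02⟩ := hD
      refine Or.inr (Or.inl ⟨⟨hP, fun M => ?_⟩,
        fun h => h.2 ⟨y0, hy01, hy02⟩,
        fun h => h.1 ⟨y0, hy01, hy02⟩,
        fun h => hP ⟨h.1.choose, h.1.choose_spec.1⟩⟩)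
      exact dual_unbounded A b c y0 hy01 hy02 hP M
    · -- both infeasible : C1
      refine Or.inl ⟨⟨hP, hD⟩,
        fun h => hD ⟨(h.2 0).choose, (h.2 0).choose_spec.1⟩,
        fun h => hP ⟨(h.2 0).choose, (h.2 0).choose_spec.1⟩,
        fun h => hP ⟨h.1.choose, h.1.choose_spec.1⟩⟩
end

section
/- Counterexample to the Existence-Duality Theorem over the integers: consider the integer program with A = (2, -2)ᵀ ∈ ℤ^{2×1}, b = (1, -1)ᵀ, c = 0. Then (i) the primal program is infeasible: there is no x ∈ ℤ with x ≥ 0, 2x ≤ 1 and -2x ≤ -1; (ii) the dual program attains an optimal solution: y = (0,0) is dual-feasible (y ≥ 0 and y₁·2 + y₂·(-2) ≥ 0), and every dual-feasible y ∈ ℤ² satisfies g(y) = y₁·1 + y₂·(-1) ≥ 0 = g(0,0). In particular the dual program is neither infeasible nor unbounded while the primal is infeasible. -/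
/-- Counterexample to the Existence-Duality Theorem over the integers: for the
program with A = (2, -2)ᵀ, b = (1, -1)ᵀ, c = 0, the primal is infeasible while
the dual attains the optimum at y = (0, 0). -/
theorem integer_existence_duality_counterexample :
    (¬∃ x : ℤ, 0 ≤ x ∧ 2 * x ≤ 1 ∧ -2 * x ≤ -1) ∧
    ((0 : ℤ) ≤ 0 ∧ (0 : ℤ) ≤ 0 ∧ 0 ≤ (0 : ℤ) * 2 + (0 : ℤ) * (-2)) ∧
    (∀ y₁ y₂ : ℤ, 0 ≤ y₁ → 0 ≤ y₂ → 0 ≤ y₁ * 2 + y₂ * (-2) →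
      (0 : ℤ) * 1 + (0 : ℤ) * (-1) ≤ y₁ * 1 + y₂ * (-1)) := by
  refine ⟨?_, ⟨le_refl _, le_refl _, by norm_num⟩, ?_⟩
  · rintro ⟨x, hx, h1, h2⟩; omega
  · intro y₁ y₂ h1 h2 h3; omega
end

section
/- No central element between ab and ba: Let R be a linearly ordered ring (not necessarily commutative) and let a, b ∈ R with a > 0 and b > 0 and a*b ≤ b*a. Then there is no element z in the center of R with a*b < z and z < b*a. -/
/-- No central element lies strictly between a*b and b*a in a linearly ordered ring. -/
theorem no_central_element_between {R : Type*} [Ring R] [LinearOrder R] [IsStrictOrderedRing R]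
    (a b : R) (ha : 0 < a) (hb : 0 < b) (hab : a * b ≤ b * a) :
    ¬∃ z ∈ Set.center R, a * b < z ∧ z < b * a := by
  rintro ⟨z, hz, h1, h2⟩
  have hc : z * a = a * z := (Set.mem_center_iff.mp hz).comm a
  have e1 : a * b * a < z * a := mul_lt_mul_of_pos_right h1 ha
  have e2 : a * z < a * (b * a) := mul_lt_mul_of_pos_left h2 ha
  rw [hc] at e1
  rw [mul_assoc] at e1
  exact absurd (e1.trans e2) (lt_irrefl _)
end

section
/- Infinitesimal commutator corollary: Let R be a linearly ordered ring (not necessarily commutative) with a, b ∈ R, a > 0, b > 0, a*b ≤ b*a, and suppose a*b is finite, i.e., there exists an integer N with a*b < (N : R). Then the difference b*a - a*b is zero or infinitesimal: for every natural number n, (n : R) * (b*a - a*b) < 1. -/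
lemma cast_left_comm {R : Type*} [Ring R] (j : ℕ) (r s : R) :
    (j : R) * (r * s) = r * ((j : R) * s) := by
  rw [← mul_assoc, (Nat.cast_commute j r).eq, mul_assoc]

lemma pow_ba {R : Type*} [Ring R] (a b : R) : ∀ k : ℕ, (b*a)^(k+1) = b * ((a*b)^k * a)
  | 0 => by simp
  | k+1 => by
    calc (b*a)^(k+2) = (b*a) * (b*a)^(k+1) := by rw [← pow_succ']
      _ = (b*a) * (b * ((a*b)^k * a)) := by rw [pow_ba a b k]
      _ = b * ((a*b)^(k+1) * a) := by
          rw [pow_succ']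
          simp only [mul_assoc]

lemma nat_floor_exists {R : Type*} [Ring R] [LinearOrder R] [IsStrictOrderedRing R] {x : R} (hx : 0 ≤ x) {K : ℕ}
    (hK : x < K) : ∃ M : ℕ, (M : R) ≤ x ∧ x < (M : R) + 1 := by
  classical
  set P : ℕ → Prop := fun j => (j : R) ≤ x with hP
  have hP0 : P 0 := by simpa [hP] using hx
  have hPK : ¬ P K := not_le.2 hK
  set M := Nat.findGreatest P K with hM
  have hPM : P M := Nat.findGreatest_spec (Nat.zero_le K) hP0
  refine ⟨M, hPM, ?_⟩
  by_contra hlt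
  push_neg at hlt
  have hPM1 : P (M+1) := by
    show ((M+1 : ℕ) : R) ≤ x
    exact_mod_cast hlt
  have hMle : M ≤ K := Nat.findGreatest_le K
  have hMK : M + 1 ≤ K := by
    rcases Nat.lt_or_ge M K with h | h
    · omega
    · exfalso; exact hPK ((le_antisymm hMle h) ▸ hPM)
  exact Nat.findGreatest_is_greatest (Nat.lt_succ_self M) hMK hPM1

lemma nat_binom (M m : ℕ) : ∀ k : ℕ, M^(k+1) + (k+1)*m*M^k ≤ (M+m)^(k+1)
  | 0 => by simp
  | k+1 => by
    have ih := nat_binom M m k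
    have hexp : (M^(k+1) + (k+1)*m*M^k)*(M+m)
        = M^(k+2) + (k+2)*m*M^(k+1) + (k+1)*(m*m)*M^k := by ring
    calc M^(k+2) + (k+2)*m*M^(k+1)
        ≤ (M^(k+1) + (k+1)*m*M^k)*(M+m) := by rw [hexp]; exact Nat.le_add_right _ _
      _ ≤ (M+m)^(k+1)*(M+m) := Nat.mul_le_mul_right _ ih
      _ = (M+m)^(k+2) := (pow_succ _ _).symm

lemma succ_pow_le_three (M : ℕ) (hM : 1 ≤ M) : (M+1)^M ≤ 3*M^M := by
  have h : (((M+1)^M : ℕ) : ℝ) ≤ ((3*M^M : ℕ) : ℝ) := by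
    have hMpos : (0:ℝ) < M := by exact_mod_cast hM
    have key : ((M:ℝ)+1) ≤ (M:ℝ) * Real.exp (1/M) := by
      have h1 : 1/(M:ℝ) + 1 ≤ Real.exp (1/M) := Real.add_one_le_exp _
      have h2 := mul_le_mul_of_nonneg_left h1 hMpos.le
      calc (M:ℝ)+1 = (M:ℝ)*(1/M + 1) := by field_simp; ring
        _ ≤ (M:ℝ) * Real.exp (1/M) := h2
    have hr : ((M:ℝ)+1)^M ≤ 3*(M:ℝ)^M := by
      calc ((M:ℝ)+1)^M ≤ ((M:ℝ) * Real.exp (1/M))^M := by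
            apply pow_le_pow_left₀ (by positivity) key
        _ = (M:ℝ)^M * Real.exp (1/M)^M := mul_pow _ _ _
        _ = (M:ℝ)^M * Real.exp 1 := by
            rw [← Real.exp_nat_mul]
            congr 1
            field_simp
        _ ≤ (M:ℝ)^M * 3 := by
            apply mul_le_mul_of_nonneg_left _ (by positivity)
            linarith [Real.exp_one_lt_d9]
        _ = 3*(M:ℝ)^M := by ring
    push_cast
    linarith [hr]
  exact_mod_cast h

lemma final_nat (n p Nn M : ℕ) (hn : 2 ≤ n) (hp : 1 ≤ p) (hN : 1 ≤ Nn)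
    (hM1 : n*(7*Nn+7) ≤ M) (hM2 : M+1 ≤ n*(p*(7*Nn+7))*Nn)
    (h : M^(M+1) + (M+1)*(p*(7*Nn+7))*M^M ≤ (M+1)^M*(M+1+n*(p*(7*Nn+7))*Nn)) : False := by
  have hq : 14 ≤ 7*Nn+7 := by omega
  have hM_1 : 1 ≤ M := le_trans (by nlinarith) hM1
  have h3 := succ_pow_le_three M hM_1
  have hMM : 0 < M^M := Nat.pow_pos (by omega)
  have h4 : (M+1)*(p*(7*Nn+7)) ≤ 3*(M+1+n*(p*(7*Nn+7))*Nn) := by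
    have h5 : (M+1)*(p*(7*Nn+7))*M^M ≤ 3*(M+1+n*(p*(7*Nn+7))*Nn)*M^M := by
      calc (M+1)*(p*(7*Nn+7))*M^M
          ≤ M^(M+1) + (M+1)*(p*(7*Nn+7))*M^M := Nat.le_add_left _ _
        _ ≤ (M+1)^M*(M+1+n*(p*(7*Nn+7))*Nn) := h
        _ ≤ 3*M^M*(M+1+n*(p*(7*Nn+7))*Nn) := Nat.mul_le_mul_right _ h3
        _ = 3*(M+1+n*(p*(7*Nn+7))*Nn)*M^M := by ring
    exact Nat.le_of_mul_le_mul_right h5 hMM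
  set q := 7*Nn+7 with hqdef
  have e1 : (n*q+1)*(p*q) ≤ (M+1)*(p*q) := Nat.mul_le_mul_right _ (by omega)
  have e2 : (n*q+1)*(p*q) = 7*(n*p*q*Nn) + 7*(n*p*q) + p*q := by
    rw [hqdef]; ring
  have e3 : 3*(M+1+n*(p*q)*Nn) ≤ 6*(n*p*q*Nn) := by
    have : n*(p*q)*Nn = n*p*q*Nn := by ring
    omega
  have e4 : 1 ≤ p*q := Nat.one_le_iff_ne_zero.2 (by positivity)
  have e5 : 0 ≤ n*p*q := Nat.zero_le _
  have e6 : 0 ≤ n*p*q*Nn := Nat.zero_le _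
  linarith [e1, e2, e3, e4, h4, e5, e6]

/-- If a*b is finite and a*b ≤ b*a, then b*a - a*b is zero or infinitesimal. -/
theorem commutator_infinitesimal {R : Type*} [Ring R] [LinearOrder R] [IsStrictOrderedRing R]
    (a b : R) (ha : 0 < a) (hb : 0 < b) (hab : a * b ≤ b * a)
    (hfin : ∃ N : ℤ, a * b < (N : R)) :
    ∀ n : ℕ, (n : R) * (b * a - a * b) < 1 := by
  intro n₀
  by_contra hcon
  push_neg at hcon
  obtain ⟨N, hN⟩ := hfin
  set x := a * b with hxdef
  set y := b * a with hydef
  clear_value x y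
  have hx_pos : 0 < x := by rw [hxdef]; exact mul_pos ha hb
  have hy_pos : 0 < y := by rw [hydef]; exact mul_pos hb ha
  set Nn := N.toNat with hNndef
  have hNR : x < ((Nn : ℕ) : R) := by
    refine hN.trans_le ?_
    have h1 : (N : ℤ) ≤ (Nn : ℤ) := by rw [hNndef]; exact Int.self_le_toNat N
    exact_mod_cast h1
  clear_value Nn
  have hNn_pos : 1 ≤ Nn := by
    by_contra h
    push_neg at h
    have h0 : Nn = 0 := by omega
    rw [h0] at hNR
    simp at hNR
    exact absurd hNR (asymm hx_pos)
  set n := n₀ + 2 with hndef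
  clear_value n
  have hc0 : 0 ≤ y - x := sub_nonneg.2 hab
  have hc1 : (1 : R) ≤ (n : R) * (y - x) := by
    have h1 : (n₀ : R) * (y - x) ≤ (n : R) * (y - x) := by
      apply mul_le_mul_of_nonneg_right _ hc0
      have h2 : (n₀ : ℕ) ≤ n := by omega
      exact_mod_cast h2
    exact hcon.trans h1
  have hn2 : ((2:ℕ) : R) ≤ (n : R) := by
    have h2 : (2:ℕ) ≤ n := by omega
    exact_mod_cast h2
  -- y is also bounded by Nn
  have hyx2 : y^2 = b * (x * a) := by
    rw [hxdef, hydef]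
    simpa using pow_ba a b 1
  have hyN : y < (Nn : R) := by
    by_contra hge
    push_neg at hge
    have h1 : b * (x * a) < b * ((Nn:R) * a) := by
      apply mul_lt_mul_of_pos_left _ hb
      exact mul_lt_mul_of_pos_right hNR ha
    have h2 : b * ((Nn:R) * a) = (Nn:R) * y := by
      rw [hydef, ← mul_assoc, ← (Nat.cast_commute Nn b).eq, mul_assoc]
    have h3 : (Nn:R) * y ≤ y * y := mul_le_mul_of_nonneg_right hge hy_pos.le
    have h4 : y * y < y * y := by
      calc y * y = y^2 := (sq y).symm
        _ = b * (x * a) := hyx2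
        _ < (Nn:R) * y := h2 ▸ h1
        _ ≤ y * y := h3
    exact lt_irrefl _ h4
  by_cases hinf : ∀ p : ℕ, (p : R) * x < 1
  · -- x is infinitesimal: easy contradiction
    have hnx : 0 ≤ (n:R) * x := mul_nonneg (Nat.cast_nonneg n) hx_pos.le
    have hnn : (1:R) ≤ (n:R) * y := by
      have hc1' : (1:R) ≤ (n:R)*y - (n:R)*x := by rw [← mul_sub]; exact hc1
      exact hc1'.trans (sub_le_self _ hnx)
    have hny_pos : (0:R) < (n:R) * y := lt_of_lt_of_le one_pos hnn
    have hsq : ((n:R)*y)^2 ≤ y := by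
      have e1 : ((n:R)*y)^2 = (n:R)^2 * y^2 := (Nat.cast_commute n y).mul_pow 2
      have e2 : (n:R)^2 * y^2 = b * (((n*n : ℕ):R) * (x * a)) := by
        rw [hyx2, sq, ← Nat.cast_mul, cast_left_comm]
      have e3 : b * (((n*n : ℕ):R) * (x * a)) ≤ b * a := by
        have h5 : ((n*n:ℕ):R) * x ≤ 1 := (hinf (n*n)).le
        have h6 : ((n*n:ℕ):R) * x * a ≤ 1 * a := mul_le_mul_of_nonneg_right h5 ha.le
        have h7 : ((n*n:ℕ):R) * (x * a) ≤ a := by rw [← mul_assoc]; simpa using h6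
        exact mul_le_mul_of_nonneg_left h7 hb.le
      calc ((n:R)*y)^2 = b * (((n*n : ℕ):R) * (x * a)) := by rw [e1, e2]
        _ ≤ b * a := e3
        _ = y := hydef.symm
    have h5 : (n:R)*y ≤ ((n:R)*y)^2 := by
      calc (n:R)*y = 1*((n:R)*y) := (one_mul _).symm
        _ ≤ ((n:R)*y)*((n:R)*y) := mul_le_mul_of_nonneg_right hnn hny_pos.le
        _ = ((n:R)*y)^2 := (sq _).symm
    have h6 : ((2:ℕ):R)*y ≤ (n:R)*y := mul_le_mul_of_nonneg_right hn2 hy_pos.le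
    have h7 : ((2:ℕ):R)*y = y + y := by push_cast; exact two_mul y
    have k1 : y + y ≤ y := by
      calc y + y = ((2:ℕ):R)*y := h7.symm
        _ ≤ (n:R)*y := h6
        _ ≤ ((n:R)*y)^2 := h5
        _ ≤ y := hsq
    exact absurd hy_pos (not_lt.2 (add_le_iff_nonpos_left.1 k1))
  · -- main case: x is not infinitesimal
    push_neg at hinf
    obtain ⟨p, hp⟩ := hinf
    have hp1 : 1 ≤ p := by
      by_contra h
      push_neg at h
      have h0 : p = 0 := by omega
      rw [h0] at hp
      simp at hp
      exact absurd hp (by norm_num)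
    set q := 7 * Nn + 7 with hqdef
    set m := p * q with hmdef
    set nm := n * m with hnmdef
    have hq1 : 1 ≤ q := by omega
    have hm1 : 1 ≤ m := by
      rw [hmdef]; exact Nat.one_le_iff_ne_zero.2 (Nat.mul_ne_zero (by omega) (by omega))
    have hnm1 : 1 ≤ nm := by
      rw [hnmdef]; exact Nat.one_le_iff_ne_zero.2 (Nat.mul_ne_zero (by omega) (by omega))
    clear_value q m nm
    set X := ((nm : ℕ) : R) * x with hXdef
    clear_value X
    have hX0 : 0 ≤ X := by
      rw [hXdef]; exact mul_nonneg (Nat.cast_nonneg _) hx_pos.le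
    have hnmR : (0:R) < ((nm:ℕ):R) := by exact_mod_cast hnm1
    have hXK : X < ((nm * Nn : ℕ) : R) := by
      rw [hXdef]
      calc ((nm:ℕ):R) * x < ((nm:ℕ):R) * ((Nn:ℕ):R) := mul_lt_mul_of_pos_left hNR hnmR
        _ = ((nm*Nn : ℕ):R) := (Nat.cast_mul _ _).symm
    obtain ⟨M, hM_le, hM_lt⟩ := nat_floor_exists hX0 hXK
    have hM_lb : n * q ≤ M := by
      have h3 : ((n*q:ℕ):R) * 1 ≤ ((n*q:ℕ):R) * ((p:R)*x) :=
        mul_le_mul_of_nonneg_left hp (Nat.cast_nonneg _)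
      have h4 : ((n*q:ℕ):R) * ((p:R)*x) = X := by
        rw [hXdef, ← mul_assoc, ← Nat.cast_mul]
        have e : n*q*p = nm := by rw [hnmdef, hmdef]; ring
        rw [e]
      have h1 : ((n*q : ℕ):R) ≤ X := by
        calc ((n*q:ℕ):R) = ((n*q:ℕ):R) * 1 := (mul_one _).symm
          _ ≤ ((n*q:ℕ):R) * ((p:R)*x) := h3
          _ = X := h4
      have h5 : ((n*q:ℕ):R) < ((M+1:ℕ):R) :=
        lt_of_le_of_lt h1 (by push_cast; exact hM_lt)
      have h6 : n*q < M+1 := by exact_mod_cast h5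
      omega
    have hM_ub : M + 1 ≤ nm * Nn := by
      have h4 : ((M:ℕ):R) < ((nm*Nn:ℕ):R) := lt_of_le_of_lt hM_le hXK
      have h5 : M < nm*Nn := by exact_mod_cast h4
      omega
    set Y := ((nm:ℕ):R) * y with hYdef
    clear_value Y
    have hY_eq : Y = X + ((nm:ℕ):R) * (y - x) := by
      rw [hYdef, hXdef, mul_sub]
      abel
    have hmn_le : ((m:ℕ):R) ≤ ((nm:ℕ):R) * (y - x) := by
      have h6 : ((m:ℕ):R)*1 ≤ ((m:ℕ):R)*((n:R)*(y-x)) :=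
        mul_le_mul_of_nonneg_left hc1 (Nat.cast_nonneg _)
      have h7 : ((m:ℕ):R)*((n:R)*(y-x)) = ((nm:ℕ):R)*(y-x) := by
        rw [← mul_assoc, ← Nat.cast_mul]
        have e : m*n = nm := by rw [hnmdef]; ring
        rw [e]
      calc ((m:ℕ):R) = ((m:ℕ):R)*1 := (mul_one _).symm
        _ ≤ ((m:ℕ):R)*((n:R)*(y-x)) := h6
        _ = ((nm:ℕ):R)*(y-x) := h7
    have hY_le_U : Y ≤ ((M + 1 + nm*Nn : ℕ):R) := by
      have h7 : ((nm:ℕ):R)*(y-x) ≤ ((nm:ℕ):R)*((Nn:ℕ):R) := by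
        apply mul_le_mul_of_nonneg_left _ (Nat.cast_nonneg _)
        exact (sub_le_self y hx_pos.le).trans hyN.le
      have h8 : ((nm:ℕ):R)*((Nn:ℕ):R) = ((nm*Nn:ℕ):R) := (Nat.cast_mul _ _).symm
      calc Y = X + ((nm:ℕ):R)*(y-x) := hY_eq
        _ ≤ ((M+1:ℕ):R) + ((nm*Nn:ℕ):R) :=
            add_le_add (le_of_lt (by push_cast; exact hM_lt)) (h7.trans h8.le)
        _ = ((M+1+nm*Nn : ℕ):R) := (Nat.cast_add _ _).symm
    -- lower bound chain
    have s1 : (((M+m : ℕ)):R) ≤ Y := by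
      calc (((M+m:ℕ)):R) = ((M:ℕ):R) + ((m:ℕ):R) := Nat.cast_add _ _
        _ ≤ X + ((nm:ℕ):R)*(y-x) := add_le_add hM_le hmn_le
        _ = Y := hY_eq.symm
    have chain1 : (((M+m)^(M+1) : ℕ) : R) ≤ Y^(M+1) := by
      have hMm0 : (0:R) ≤ ((M+m:ℕ):R) := Nat.cast_nonneg _
      calc (((M+m)^(M+1) : ℕ):R) = (((M+m:ℕ)):R)^(M+1) := Nat.cast_pow _ _
        _ ≤ Y^(M+1) := pow_le_pow_left₀ hMm0 s1 _
    -- upper bound chain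
    have chain2 : Y^(M+1) ≤ (((M+1)^M * (M+1+nm*Nn) : ℕ) : R) := by
      have e1 : Y^(M+1) = ((nm:ℕ):R)^(M+1) * y^(M+1) := by
        rw [hYdef]
        exact (Nat.cast_commute (nm:ℕ) y).mul_pow (M+1)
      have e2 : y^(M+1) = b * (x^M * a) := by
        rw [hxdef, hydef]
        exact pow_ba a b M
      have e4 : X^M = ((nm:ℕ):R)^M * x^M := by
        rw [hXdef]
        exact (Nat.cast_commute (nm:ℕ) x).mul_pow M
      have e3 : ((nm:ℕ):R)^(M+1) * (b * (x^M * a)) = ((nm:ℕ):R) * (b * (X^M * a)) := by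
        rw [e4, pow_succ', mul_assoc]
        congr 1
        have e5 : ((nm:ℕ):R)^M = ((nm^M : ℕ):R) := (Nat.cast_pow _ _).symm
        rw [e5, cast_left_comm]
        congr 1
        rw [← mul_assoc]
      have hXM : X^M ≤ (((M+1)^M : ℕ):R) := by
        have hXle : X ≤ (((M+1:ℕ)):R) := by push_cast; exact hM_lt.le
        calc X^M ≤ ((((M+1):ℕ)):R)^M := pow_le_pow_left₀ hX0 hXle M
          _ = (((M+1)^M : ℕ):R) := (Nat.cast_pow _ _).symm
      have e6 : ((nm:ℕ):R) * (b * (X^M * a)) ≤ ((nm:ℕ):R) * (b * ((((M+1)^M : ℕ):R) * a)) := by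
        apply mul_le_mul_of_nonneg_left _ (Nat.cast_nonneg _)
        apply mul_le_mul_of_nonneg_left _ hb.le
        exact mul_le_mul_of_nonneg_right hXM ha.le
      have e7 : ((nm:ℕ):R) * (b * ((((M+1)^M : ℕ):R) * a)) = (((M+1)^M : ℕ):R) * Y := by
        rw [← cast_left_comm, ← mul_assoc, ← (Nat.cast_commute ((M+1)^M) ((nm:ℕ):R)).eq,
          mul_assoc, hYdef, hydef]
      have e8 : (((M+1)^M : ℕ):R) * Y ≤ (((M+1)^M:ℕ):R) * ((M+1+nm*Nn : ℕ):R) :=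
        mul_le_mul_of_nonneg_left hY_le_U (Nat.cast_nonneg _)
      calc Y^(M+1) = ((nm:ℕ):R)^(M+1) * (b * (x^M * a)) := by rw [e1, e2]
        _ = ((nm:ℕ):R) * (b * (X^M * a)) := e3
        _ ≤ ((nm:ℕ):R) * (b * ((((M+1)^M : ℕ):R) * a)) := e6
        _ = (((M+1)^M : ℕ):R) * Y := e7
        _ ≤ (((M+1)^M:ℕ):R) * ((M+1+nm*Nn : ℕ):R) := e8
        _ = (((M+1)^M * (M+1+nm*Nn) : ℕ):R) := (Nat.cast_mul _ _).symm
    have hnat : (M+m)^(M+1) ≤ (M+1)^M * (M+1+nm*Nn) :=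
      Nat.cast_le.mp (chain1.trans chain2)
    have hbin := nat_binom M m M
    have hfin2 : M^(M+1) + (M+1)*m*M^M ≤ (M+1)^M * (M+1+nm*Nn) := le_trans hbin hnat
    have hm' : m = p*(7*Nn+7) := by rw [hmdef, hqdef]
    have hnm' : nm = n*(p*(7*Nn+7)) := by rw [hnmdef, hmdef, hqdef]
    refine final_nat n p Nn M (by omega) hp1 hNn_pos ?_ ?_ ?_
    · rw [hqdef] at hM_lb; exact hM_lb
    · rw [← hnm']; exact hM_ub
    · rw [← hnm', ← hm']; exact hfin2
end

section
/- Duality gap for ordered non-division rings: Let R be a linearly ordered ring (not necessarily commutative) and let a ∈ R with a > 0 and a not a unit. Consider the one-dimensional program with A = a, b = 1, c = 1. Then for every primal-feasible x (x ≥ 0 and x*a ≤ 1) and every dual-feasible y (y ≥ 0 and a*y ≥ 1), one has x < y; in particular f(x) = x < y = g(y) for all feasible pairs, so the primal and dual objective values are never equal. -/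
/-- Duality gap for ordered non-division rings: with A = a (a positive non-unit),
b = 1, c = 1, every primal-feasible x is strictly less than every dual-feasible y,
so the primal and dual objective values are never equal. -/
theorem duality_gap_non_division {R : Type*} [Ring R] [LinearOrder R] [IsStrictOrderedRing R]
    (a : R) (ha : 0 < a) (hu : ¬IsUnit a) :
    ∀ x y : R, 0 ≤ x → x * a ≤ 1 → 0 ≤ y → 1 ≤ a * y → x < y := by
  intro x y hx hxa hy hay
  have h1 : x ≤ x * (a * y) := le_mul_of_one_le_right hx hay
  have h2 : x * (a * y) ≤ y := by
    calc x * (a * y) = (x * a) * y := (mul_assoc x a y).symm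
    _ ≤ 1 * y := mul_le_mul_of_nonneg_right hxa hy
    _ = y := one_mul y
  rcases lt_or_eq_of_le (h1.trans h2) with h | h
  · exact h
  · exfalso
    subst h
    have e1 : x * (a * x) = x := le_antisymm h2 h1
    have e2 : (x * a) * x = x := by rw [mul_assoc]; exact e1
    rcases eq_or_lt_of_le hx with hx0 | hx0
    · have : (1 : R) ≤ 0 := by simpa [← hx0] using hay
      exact absurd this (by norm_num)
    · have hax : a * x = 1 := mul_left_cancel₀ hx0.ne' (e1.trans (mul_one x).symm)
      have hxa1 : x * a = 1 := mul_right_cancel₀ hx0.ne' (e2.trans (one_mul x).symm)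
      exact hu ⟨⟨a, x, hax, hxa1⟩, rfl⟩
end

section
/- Failure of Strong Duality in non-division rings with a smallest positive element: Let R be a linearly ordered ring (not necessarily commutative) in which 1 is the smallest positive element (i.e., 1 ≤ x for every x > 0), and let a ∈ R with a > 0 and a not a unit. Consider the one-dimensional program with A = a, b = 1, c = 1. Then: (i) every primal-feasible x (x ≥ 0 and x*a ≤ 1) equals 0, so x* = 0 is the optimal primal solution with f(x*) = 0; (ii) y = 1 is dual-feasible (1 ≥ 0 and a*1 ≥ 1) and every dual-feasible y (y ≥ 0 and a*y ≥ 1) satisfies 1 ≤ y, so y* = 1 is the optimal dual solution with g(y*) = 1. Hence both programs attain optimal solutions but f(x*) = 0 ≠ 1 = g(y*). -/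
/-- Failure of Strong Duality in non-division ordered rings where 1 is the smallest
positive element: for A = a (a positive non-unit), b = 1, c = 1, the primal optimum
is x* = 0, the dual optimum is y* = 1, and the optimal values differ. -/
theorem strong_duality_fails {R : Type*} [Ring R] [LinearOrder R] [IsStrictOrderedRing R]
    (hmin : ∀ x : R, 0 < x → 1 ≤ x)
    (a : R) (ha : 0 < a) (hu : ¬IsUnit a) :
    (∀ x : R, 0 ≤ x → x * a ≤ 1 → x = 0) ∧
    ((0 : R) ≤ 1 ∧ 1 ≤ a * 1) ∧
    (∀ y : R, 0 ≤ y → 1 ≤ a * y → 1 ≤ y) ∧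
    (0 : R) ≠ 1 := by
  have ha1 : (1 : R) ≤ a := hmin a ha
  refine ⟨?_, ⟨zero_le_one, by simpa using ha1⟩, ?_, zero_ne_one⟩
  · intro x hx hxa
    rcases hx.eq_or_lt with h | h
    · exact h.symm
    · exfalso
      have hx1 : (1 : R) ≤ x := hmin x h
      have h1 : a ≤ x * a := by
        calc a = 1 * a := (one_mul a).symm
        _ ≤ x * a := mul_le_mul_of_nonneg_right hx1 ha.le
      have h2 : a = 1 := le_antisymm (h1.trans hxa) ha1
      exact hu (h2 ▸ isUnit_one)
  · intro y hy hay
    rcases hy.eq_or_lt with h | h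
    · exfalso
      rw [← h, mul_zero] at hay
      exact absurd hay (by norm_num)
    · exact hmin y h
end

section
/- Failure of the Existence-Duality Theorem (cases 2 and 3) in ordered non-division rings: Let R be a linearly ordered ring (not necessarily commutative) and let a ∈ R with a > 0 and a not a unit. Consider the program with A = (a, -a)ᵀ ∈ R^{2×1}, b = (1, -1)ᵀ, c = 0. Then: (i) the primal program is infeasible: there is no x ∈ R with x ≥ 0, a*x ≤ 1 and -(a*x) ≤ -1; (ii) the dual program is feasible, bounded, and attains an optimum: y = (0,0) is dual-feasible (y₁ ≥ 0, y₂ ≥ 0, y₁*a + y₂*(-a) ≥ 0), and every dual-feasible (y₁, y₂) satisfies g(y) = y₁*1 + y₂*(-1) ≥ 0 = g(0,0). -/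
/-- Failure of cases (2),(3) of the Existence-Duality Theorem in ordered
non-division rings: for A = (a, -a)ᵀ, b = (1, -1)ᵀ, c = 0 with a a positive
non-unit, the primal is infeasible while the dual is feasible, bounded, and
attains its optimum at y = (0, 0). -/
theorem existence_duality_fails {R : Type*} [Ring R] [LinearOrder R] [IsStrictOrderedRing R]
    (a : R) (ha : 0 < a) (hu : ¬IsUnit a) :
    (¬∃ x : R, 0 ≤ x ∧ a * x ≤ 1 ∧ -(a * x) ≤ -1) ∧
    ((0 : R) ≤ 0 ∧ (0 : R) ≤ 0 ∧ 0 ≤ (0 : R) * a + (0 : R) * (-a)) ∧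
    (∀ y₁ y₂ : R, 0 ≤ y₁ → 0 ≤ y₂ → 0 ≤ y₁ * a + y₂ * (-a) →
      (0 : R) * 1 + (0 : R) * (-1) ≤ y₁ * 1 + y₂ * (-1)) := by
  refine ⟨?_, ⟨le_refl _, le_refl _, by simp⟩, ?_⟩
  · rintro ⟨x, -, h1, h2⟩
    have hax : a * x = 1 := le_antisymm h1 (neg_le_neg_iff.mp h2)
    have h : a * (x * a - 1) = 0 := by
      rw [mul_sub, ← mul_assoc, hax, one_mul, mul_one, sub_self]
    have hxa : x * a = 1 := by
      rcases mul_eq_zero.mp h with h' | h'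
      · exact absurd h' ha.ne'
      · exact sub_eq_zero.mp h'
    exact hu ⟨⟨a, x, hax, hxa⟩, rfl⟩
  · intro y₁ y₂ _ _ hd
    have h' : y₂ * a ≤ y₁ * a := by
      rw [mul_neg, ← sub_eq_add_neg] at hd
      exact sub_nonneg.mp hd
    have := le_of_mul_le_mul_right h' ha
    simpa using this
end

section
/- Failure of attainment of the dual optimum when 1 is not the smallest positive element: Let R be a linearly ordered ring (not necessarily commutative), let a ∈ R with a > 0, suppose a has no right inverse (there is no x with a*x = 1), suppose there is no x ∈ R with 0 < a*x < 1, and suppose there exists p ∈ R with 0 < p < 1. Then for every dual-feasible y (i.e., y ≥ 0 and a*y ≥ 1), the element y*p is again dual-feasible (y*p ≥ 0 and a*(y*p) ≥ 1) and satisfies y*p < y. Consequently the dual program is feasible and bounded below by 1 but attains no optimal (minimal) solution. -/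
/-- Failure of attainment of the dual optimum when 1 is not the smallest positive
element: if a > 0 has no right inverse, there is no x with 0 < a*x < 1, and
0 < p < 1, then for every dual-feasible y the element y*p is dual-feasible and
strictly smaller; consequently the dual program is feasible but attains no
minimal solution. -/
theorem dual_optimum_not_attained {R : Type*} [Ring R] [LinearOrder R] [IsStrictOrderedRing R]
    (a : R) (ha : 0 < a)
    (hnr : ¬∃ x : R, a * x = 1)
    (hns : ¬∃ x : R, 0 < a * x ∧ a * x < 1)
    (p : R) (hp0 : 0 < p) (hp1 : p < 1) :
    (∀ y : R, 0 ≤ y → 1 ≤ a * y → 0 ≤ y * p ∧ 1 ≤ a * (y * p) ∧ y * p < y) ∧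
    (∃ y : R, 0 ≤ y ∧ 1 ≤ a * y) ∧
    (¬∃ y : R, (0 ≤ y ∧ 1 ≤ a * y) ∧ ∀ z : R, 0 ≤ z → 1 ≤ a * z → y ≤ z) := by
  have key : ∀ y : R, 0 ≤ y → 1 ≤ a * y → 0 ≤ y * p ∧ 1 ≤ a * (y * p) ∧ y * p < y := by
    intro y hy hay
    have hypos : 0 < y := by
      rcases hy.lt_or_eq with h | h
      · exact h
      · exfalso; rw [← h, mul_zero] at hay; exact absurd hay (by norm_num)
    have hpos : 0 < a * (y * p) := by
      have : 0 < a * y := lt_of_lt_of_le zero_lt_one hay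
      rw [← mul_assoc]; exact mul_pos this hp0
    have hge : 1 ≤ a * (y * p) := by
      by_contra h
      push_neg at h
      rcases lt_trichotomy (a * (y * p)) 1 with h1 | h1 | h1
      · exact hns ⟨y * p, hpos, h1⟩
      · exact hnr ⟨y * p, h1⟩
      · exact absurd h1 (not_lt.mpr h.le)
    refine ⟨le_of_lt (mul_pos hypos hp0), hge, ?_⟩
    calc y * p < y * 1 := mul_lt_mul_of_pos_left hp1 hypos
      _ = y := mul_one y
  have feas : ∃ y : R, 0 ≤ y ∧ 1 ≤ a * y := by
    refine ⟨1, zero_le_one, ?_⟩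
    rw [mul_one]
    by_contra h
    push_neg at h
    exact hns ⟨1, by rw [mul_one]; exact ⟨ha, h⟩⟩
  refine ⟨key, feas, ?_⟩
  rintro ⟨y, ⟨hy, hay⟩, hmin⟩
  obtain ⟨h0, h1, h2⟩ := key y hy hay
  exact absurd (hmin (y * p) h0 h1) (not_le.mpr h2)
end
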